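/- arXiv:1907.13345 — 6 statements merged into one kernel-verified Lean document; each statement's English description precedes it below -/
import Mathlib

section
/- Existence of a saddle point and the Isaacs condition for the Hamiltonian integrand: for any fixed x, p, M ∈ ℝ with M ≤ 0, there exists a pair (a*, Σ*) ∈ A×B such that L(a, Σ*) ≤ L(a*, Σ*) ≤ L(a*, Σ) for all a ∈ A and all Σ ∈ B; consequently inf_{Σ∈B} sup_{a∈A} L(a,Σ) = sup_{a∈A} inf_{Σ∈B} L(a,Σ) = L(a*, Σ*). -/
open Set Finset Filter Topology

private lemma sq_ident {d : ℕ} (t s : ℝ) (hts : t + s = 1) (a b : Fin d → ℝ) :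
    ∑ i, ((t • a + s • b) i)^2
      = t * ∑ i, (a i)^2 + s * ∑ i, (b i)^2 - t*s*∑ i, (a i - b i)^2 := by
  have hs : s = 1 - t := by linarith
  subst hs
  simp only [Pi.add_apply, Pi.smul_apply, smul_eq_mul, Finset.mul_sum,
    ← Finset.sum_add_distrib, ← Finset.sum_sub_distrib]
  exact Finset.sum_congr rfl fun i _ => by ring

private lemma Q_ident {d : ℕ} (S : Matrix (Fin d) (Fin d) ℝ) (t s : ℝ) (hts : t + s = 1)
    (a b : Fin d → ℝ) :
    ∑ i, ∑ j, (t • a + s • b) i * S i j * (t • a + s • b) j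
      = t * (∑ i, ∑ j, a i * S i j * a j) + s * (∑ i, ∑ j, b i * S i j * b j)
        - t*s*(∑ i, ∑ j, (a i - b i) * S i j * (a j - b j)) := by
  have hs : s = 1 - t := by linarith
  subst hs
  simp only [Pi.add_apply, Pi.smul_apply, smul_eq_mul, Finset.mul_sum,
    ← Finset.sum_add_distrib, ← Finset.sum_sub_distrib]
  exact Finset.sum_congr rfl fun i _ => Finset.sum_congr rfl fun j _ => by ring

private lemma Q_lin {d : ℕ} (S1 S2 : Matrix (Fin d) (Fin d) ℝ) (t s : ℝ) (a : Fin d → ℝ) :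
    ∑ i, ∑ j, a i * (t • S1 + s • S2) i j * a j
      = t * (∑ i, ∑ j, a i * S1 i j * a j) + s * (∑ i, ∑ j, a i * S2 i j * a j) := by
  simp only [Matrix.add_apply, Matrix.smul_apply, smul_eq_mul, Finset.mul_sum,
    ← Finset.sum_add_distrib]
  exact Finset.sum_congr rfl fun i _ => Finset.sum_congr rfl fun j _ => by ring

private lemma Q_nonneg {d : ℕ} {S : Matrix (Fin d) (Fin d) ℝ} (hS : S.PosSemidef)
    (a : Fin d → ℝ) : 0 ≤ ∑ i, ∑ j, a i * S i j * a j := by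
  have h := hS.dotProduct_mulVec_nonneg a
  simp only [dotProduct, Matrix.mulVec, star_trivial, Pi.star_apply] at h
  calc (0:ℝ) ≤ ∑ i, star (a i) * (∑ j, S i j * a j) := h
    _ = ∑ i, ∑ j, a i * S i j * a j := by
        exact Finset.sum_congr rfl fun i _ => by
          rw [star_trivial, Finset.mul_sum]
          exact Finset.sum_congr rfl fun j _ => by ring

private lemma sq_sum_pos {d : ℕ} {a b : Fin d → ℝ} (h : a ≠ b) :
    0 < ∑ i, (a i - b i)^2 := by
  obtain ⟨i, hi⟩ := Function.ne_iff.1 h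
  refine Finset.sum_pos' (fun j _ => sq_nonneg _) ⟨i, Finset.mem_univ i, ?_⟩
  exact pow_pos (abs_pos.2 (sub_ne_zero.2 hi)) 2 |>.trans_le (le_of_eq (by rw [sq_abs]))

private instance matFirstCountable (d : ℕ) :
    FirstCountableTopology (Matrix (Fin d) (Fin d) ℝ) :=
  inferInstanceAs (FirstCountableTopology (Fin d → Fin d → ℝ))

private lemma saddle_of_strict {d : ℕ}
    {A : Set (Fin d → ℝ)} (hA : A.Nonempty) (hAcomp : IsCompact A) (hAconv : Convex ℝ A)
    {B : Set (Matrix (Fin d) (Fin d) ℝ)} (hB : B.Nonempty) (hBcomp : IsCompact B)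
    (hBconv : Convex ℝ B)
    (f : (Fin d → ℝ) → Matrix (Fin d) (Fin d) ℝ → ℝ)
    (hfc : ContinuousOn (fun q : (Fin d → ℝ) × Matrix (Fin d) (Fin d) ℝ => f q.1 q.2) (A ×ˢ B))
    (hconc : ∀ S ∈ B, ∀ a ∈ A, ∀ b ∈ A, a ≠ b →
      (1/2) * f a S + (1/2) * f b S < f ((1/2:ℝ) • a + (1/2:ℝ) • b) S)
    (hconv : ∀ a ∈ A, ∀ S1 ∈ B, ∀ S2 ∈ B, ∀ t : ℝ, 0 < t → t ≤ 1 →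
      f a ((1-t) • S1 + t • S2) ≤ (1-t) * f a S1 + t * f a S2) :
    ∃ astar ∈ A, ∃ Sstar ∈ B, (∀ a ∈ A, f a Sstar ≤ f astar Sstar) ∧
      (∀ S ∈ B, f astar Sstar ≤ f astar S) := by
  have hca : ∀ S ∈ B, ContinuousOn (fun a => f a S) A := fun S hS =>
    hfc.comp ((continuous_id.prodMk continuous_const).continuousOn)
      (fun a ha => Set.mk_mem_prod ha hS)
  have hcS : ∀ a ∈ A, ContinuousOn (fun S => f a S) B := fun a ha =>
    hfc.comp ((continuous_const.prodMk continuous_id).continuousOn)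
      (fun S hS => Set.mk_mem_prod ha hS)
  -- maximizer selection
  have hmaxsel : ∀ S : Matrix (Fin d) (Fin d) ℝ,
      ∃ a, a ∈ A ∧ (S ∈ B → ∀ b ∈ A, f b S ≤ f a S) := by
    intro S
    by_cases hS : S ∈ B
    · obtain ⟨a, ha, hmax⟩ := hAcomp.exists_isMaxOn hA (hca S hS)
      exact ⟨a, ha, fun _ b hb => hmax hb⟩
    · exact ⟨hA.some, hA.some_mem, fun h => absurd h hS⟩
  choose g hgA hgmax using hmaxsel
  -- lower bound
  obtain ⟨C, hC⟩ : ∃ C, ∀ q ∈ A ×ˢ B, C ≤ f q.1 q.2 := by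
    obtain ⟨C, hC⟩ := ((hAcomp.prod hBcomp).image_of_continuousOn hfc).bddBelow
    exact ⟨C, fun q hq => hC (Set.mem_image_of_mem _ hq)⟩
  set ψ : Matrix (Fin d) (Fin d) ℝ → ℝ := fun S => f (g S) S with hψdef
  have hψlb : ∀ S ∈ B, C ≤ ψ S := fun S hS => hC (g S, S) (Set.mk_mem_prod (hgA S) hS)
  have hbdd : BddBelow (ψ '' B) := by
    refine ⟨C, ?_⟩
    rintro y ⟨S, hS, rfl⟩
    exact hψlb S hS
  set m := sInf (ψ '' B) with hmdef
  have hmle : ∀ S ∈ B, m ≤ ψ S := fun S hS => csInf_le hbdd (Set.mem_image_of_mem _ hS)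
  have happrox : ∀ n : ℕ, ∃ S ∈ B, ψ S < m + 1/(n+1) := by
    intro n
    have hpos : (0:ℝ) < 1/((n:ℝ)+1) := by positivity
    have hlt : m < m + 1/((n:ℝ)+1) := by linarith
    obtain ⟨y, ⟨S, hS, rfl⟩, hy⟩ := exists_lt_of_csInf_lt (hB.image ψ) hlt
    exact ⟨S, hS, hy⟩
  choose Sseq hSseqB hSseqlt using happrox
  obtain ⟨Sstar, hSstarB, φ, hφ, hφtend⟩ := hBcomp.tendsto_subseq hSseqB
  set astar := g Sstar with hastardef
  have hastarA : astar ∈ A := hgA Sstar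
  have hmax : ∀ b ∈ A, f b Sstar ≤ f astar Sstar := hgmax Sstar hSstarB
  have honedivφ : Tendsto (fun n : ℕ => 1/((φ n : ℝ)+1)) atTop (𝓝 0) :=
    tendsto_one_div_add_atTop_nhds_zero_nat.comp hφ.tendsto_atTop
  have hkey : f astar Sstar ≤ m := by
    have htend1 : Tendsto (fun n => f astar (Sseq (φ n))) atTop (𝓝 (f astar Sstar)) := by
      refine ((hcS astar hastarA Sstar hSstarB).tendsto).comp ?_
      exact tendsto_nhdsWithin_iff.2 ⟨hφtend, Eventually.of_forall (fun n => hSseqB (φ n))⟩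
    have htend2 : Tendsto (fun n : ℕ => m + 1/((φ n : ℝ)+1)) atTop (𝓝 m) := by
      simpa using tendsto_const_nhds.add honedivφ
    refine le_of_tendsto_of_tendsto' htend1 htend2 (fun n => ?_)
    calc f astar (Sseq (φ n)) ≤ ψ (Sseq (φ n)) := hgmax _ (hSseqB _) astar hastarA
      _ ≤ m + 1/((φ n : ℝ)+1) := (hSseqlt (φ n)).le
  have hψmin : ∀ S ∈ B, f astar Sstar ≤ ψ S := fun S hS => hkey.trans (hmle S hS)
  refine ⟨astar, hastarA, Sstar, hSstarB, hmax, ?_⟩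
  intro S hS
  set t : ℕ → ℝ := fun n => 1/((n:ℝ)+1) with htdef
  have ht0 : ∀ n, 0 < t n := fun n => by positivity
  have ht1 : ∀ n, t n ≤ 1 := by
    intro n
    rw [htdef]
    rw [div_le_one (by positivity)]
    simp
  set St : ℕ → Matrix (Fin d) (Fin d) ℝ := fun n => (1 - t n) • Sstar + t n • S with hStdef
  have hStB : ∀ n, St n ∈ B := fun n =>
    hBconv hSstarB hS (by linarith [ht0 n, ht1 n]) (ht0 n).le (by ring)
  set aseq : ℕ → (Fin d → ℝ) := fun n => g (St n) with haseqdef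
  have haseqA : ∀ n, aseq n ∈ A := fun n => hgA _
  have hineq : ∀ n, f astar Sstar ≤ f (aseq n) S := by
    intro n
    have h1 : f astar Sstar ≤ f (aseq n) (St n) := hψmin _ (hStB n)
    have h2 : f (aseq n) (St n) ≤ (1 - t n) * f (aseq n) Sstar + t n * f (aseq n) S :=
      hconv _ (haseqA n) _ hSstarB _ hS _ (ht0 n) (ht1 n)
    have h3 : f (aseq n) Sstar ≤ f astar Sstar := hmax _ (haseqA n)
    have h5 : (0:ℝ) ≤ 1 - t n := by linarith [ht1 n]
    have h6 := mul_le_mul_of_nonneg_left h3 h5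
    have h4 : t n * f astar Sstar ≤ t n * f (aseq n) S := by nlinarith
    exact (mul_le_mul_iff_right₀ (ht0 n)).1 h4
  obtain ⟨abar, habarA, φ2, hφ2, hφ2tend⟩ := hAcomp.tendsto_subseq haseqA
  have httend : Tendsto (fun n => t (φ2 n)) atTop (𝓝 0) :=
    tendsto_one_div_add_atTop_nhds_zero_nat.comp hφ2.tendsto_atTop
  have hSttend : Tendsto (fun n => St (φ2 n)) atTop (𝓝 Sstar) := by
    have h1 : Tendsto (fun n => (1 : ℝ) - t (φ2 n)) atTop (𝓝 (1 - 0)) :=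
      tendsto_const_nhds.sub httend
    have h2 : Tendsto (fun n => ((1 : ℝ) - t (φ2 n)) • Sstar + t (φ2 n) • S) atTop
        (𝓝 (((1:ℝ) - (0:ℝ)) • Sstar + (0:ℝ) • S)) :=
      (h1.smul tendsto_const_nhds).add (httend.smul tendsto_const_nhds)
    simpa using h2
  have hjoint : Tendsto (fun n => f (aseq (φ2 n)) (St (φ2 n))) atTop (𝓝 (f abar Sstar)) := by
    have hq : Tendsto (fun n => (aseq (φ2 n), St (φ2 n))) atTop (𝓝[A ×ˢ B] (abar, Sstar)) :=
      tendsto_nhdsWithin_iff.2 ⟨hφ2tend.prodMk_nhds hSttend,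
        Eventually.of_forall fun n => Set.mk_mem_prod (haseqA _) (hStB _)⟩
    exact ((hfc (abar, Sstar) (Set.mk_mem_prod habarA hSstarB)).tendsto).comp hq
  have habarmax : ∀ b ∈ A, f b Sstar ≤ f abar Sstar := by
    intro b hb
    have hbtend : Tendsto (fun n => f b (St (φ2 n))) atTop (𝓝 (f b Sstar)) := by
      refine ((hcS b hb Sstar hSstarB).tendsto).comp ?_
      exact tendsto_nhdsWithin_iff.2 ⟨hSttend, Eventually.of_forall fun n => hStB _⟩
    exact le_of_tendsto_of_tendsto' hbtend hjoint (fun n => hgmax _ (hStB _) b hb)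
  have habareq : abar = astar := by
    by_contra hne
    have hmid : ((1/2:ℝ) • abar + (1/2:ℝ) • astar) ∈ A :=
      hAconv habarA hastarA (by norm_num) (by norm_num) (by norm_num)
    have h1 := hconc Sstar hSstarB abar habarA astar hastarA hne
    have h2 := hmax _ hmid
    have h3 := habarmax astar hastarA
    have h4 := hmax abar habarA
    linarith
  have hfin : Tendsto (fun n => f (aseq (φ2 n)) S) atTop (𝓝 (f abar S)) := by
    have hq : Tendsto (fun n => (aseq (φ2 n), S)) atTop (𝓝[A ×ˢ B] (abar, S)) :=
      tendsto_nhdsWithin_iff.2 ⟨hφ2tend.prodMk_nhds tendsto_const_nhds,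
        Eventually.of_forall fun n => Set.mk_mem_prod (haseqA _) hS⟩
    exact ((hfc (abar, S) (Set.mk_mem_prod habarA hS)).tendsto).comp hq
  have := le_of_tendsto_of_tendsto' (tendsto_const_nhds : Tendsto (fun _ : ℕ => f astar Sstar) atTop (𝓝 (f astar Sstar))) hfin (fun n => hineq (φ2 n))
  rwa [habareq] at this

/-- Existence of a saddle point and the Isaacs condition for the Hamiltonian integrand
`L(a,Σ) = λ0·F(Σ) + (aᵀ(μ−𝐫)+r)·x·p + (1/2)(aᵀΣa)·x²·M` on `A × B`, for `M ≤ 0`. -/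
theorem exists_saddle_point_hamiltonian_integrand
    (d : ℕ) (r lam : ℝ) (μ : Fin d → ℝ) (hlam : 0 < lam)
    (A : Set (Fin d → ℝ)) (hA : A.Nonempty) (hAcomp : IsCompact A) (hAconv : Convex ℝ A)
    (B : Set (Matrix (Fin d) (Fin d) ℝ)) (hB : B.Nonempty) (hBcomp : IsCompact B)
    (hBconv : Convex ℝ B) (hBpsd : ∀ S ∈ B, S.PosSemidef)
    (F : Matrix (Fin d) (Fin d) ℝ → ℝ) (hFcont : ContinuousOn F B)
    (hFconv : ConvexOn ℝ B F)
    (x p M : ℝ) (hM : M ≤ 0)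
    (L : (Fin d → ℝ) → Matrix (Fin d) (Fin d) ℝ → ℝ)
    (hL : ∀ a S, L a S = lam * F S + ((∑ i, a i * (μ i - r)) + r) * x * p
        + (1 / 2) * (∑ i, ∑ j, a i * S i j * a j) * x ^ 2 * M) :
    ∃ astar ∈ A, ∃ Sstar ∈ B,
      (∀ a ∈ A, L a Sstar ≤ L astar Sstar) ∧
      (∀ S ∈ B, L astar Sstar ≤ L astar S) ∧
      sInf ((fun S => sSup ((fun a => L a S) '' A)) '' B) = L astar Sstar ∧
      sSup ((fun a => sInf ((fun S => L a S) '' B)) '' A) = L astar Sstar := by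
  classical
  -- continuity of L on A ×ˢ B
  have hLc : ContinuousOn
      (fun q : (Fin d → ℝ) × Matrix (Fin d) (Fin d) ℝ => L q.1 q.2) (A ×ˢ B) := by
    have hF2 : ContinuousOn
        (fun q : (Fin d → ℝ) × Matrix (Fin d) (Fin d) ℝ => F q.2) (A ×ˢ B) :=
      hFcont.comp continuous_snd.continuousOn (fun q hq => hq.2)
    have hlin : Continuous
        (fun q : (Fin d → ℝ) × Matrix (Fin d) (Fin d) ℝ =>
          ((∑ i, q.1 i * (μ i - r)) + r) * x * p) := by
      refine ((Continuous.add ?_ continuous_const).mul continuous_const).mul continuous_const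
      exact continuous_finset_sum _ fun i _ =>
        ((continuous_apply i).comp continuous_fst).mul continuous_const
    have hQ : Continuous
        (fun q : (Fin d → ℝ) × Matrix (Fin d) (Fin d) ℝ =>
          ∑ i, ∑ j, q.1 i * q.2 i j * q.1 j) := by
      refine continuous_finset_sum _ fun i _ => continuous_finset_sum _ fun j _ => ?_
      exact (((continuous_apply i).comp continuous_fst).mul
        (continuous_snd.matrix_elem i j)).mul ((continuous_apply j).comp continuous_fst)
    have heq : (fun q : (Fin d → ℝ) × Matrix (Fin d) (Fin d) ℝ => L q.1 q.2)
        = fun q => lam * F q.2 + ((∑ i, q.1 i * (μ i - r)) + r) * x * p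
          + (1 / 2) * (∑ i, ∑ j, q.1 i * q.2 i j * q.1 j) * x ^ 2 * M :=
      funext fun q => hL q.1 q.2
    rw [heq]
    exact ((continuousOn_const.mul hF2).add hlin.continuousOn).add
      ((((continuousOn_const.mul hQ.continuousOn).mul continuousOn_const).mul
        continuousOn_const))
  have hca : ∀ S ∈ B, ContinuousOn (fun a => L a S) A := fun S hS =>
    hLc.comp ((continuous_id.prodMk continuous_const).continuousOn)
      (fun a ha => Set.mk_mem_prod ha hS)
  have hcS : ∀ a ∈ A, ContinuousOn (fun S => L a S) B := fun a ha =>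
    hLc.comp ((continuous_const.prodMk continuous_id).continuousOn)
      (fun S hS => Set.mk_mem_prod ha hS)
  -- saddle points for the perturbed functions
  have hsaddle : ∀ n : ℕ, ∃ an ∈ A, ∃ Sn ∈ B,
      (∀ a ∈ A, L a Sn - (1/((n:ℝ)+1)) * ∑ i, (a i)^2
        ≤ L an Sn - (1/((n:ℝ)+1)) * ∑ i, (an i)^2) ∧
      (∀ S ∈ B, L an Sn - (1/((n:ℝ)+1)) * ∑ i, (an i)^2
        ≤ L an S - (1/((n:ℝ)+1)) * ∑ i, (an i)^2) := by
    intro n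
    set ε : ℝ := 1/((n:ℝ)+1) with hεdef
    have hε : 0 < ε := by positivity
    have hfc : ContinuousOn
        (fun q : (Fin d → ℝ) × Matrix (Fin d) (Fin d) ℝ =>
          L q.1 q.2 - ε * ∑ i, (q.1 i)^2) (A ×ˢ B) := by
      refine hLc.sub (Continuous.continuousOn ?_)
      exact continuous_const.mul (continuous_finset_sum _ fun i _ =>
        ((continuous_apply i).comp continuous_fst).pow 2)
    have hconc : ∀ S ∈ B, ∀ a ∈ A, ∀ b ∈ A, a ≠ b →
        (1/2) * (L a S - ε * ∑ i, (a i)^2) + (1/2) * (L b S - ε * ∑ i, (b i)^2)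
          < L ((1/2:ℝ) • a + (1/2:ℝ) • b) S
            - ε * ∑ i, (((1/2:ℝ) • a + (1/2:ℝ) • b) i)^2 := by
      intro S hS a ha b hb hne
      have hcs : ∑ i, ((1/2:ℝ) • a + (1/2:ℝ) • b) i * (μ i - r)
          = (1/2) * ∑ i, a i * (μ i - r) + (1/2) * ∑ i, b i * (μ i - r) := by
        simp only [Pi.add_apply, Pi.smul_apply, smul_eq_mul, Finset.mul_sum,
          ← Finset.sum_add_distrib]
        exact Finset.sum_congr rfl fun i _ => by ring
      have hQd : 0 ≤ ∑ i, ∑ j, (a i - b i) * S i j * (a j - b j) :=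
        Q_nonneg (hBpsd S hS) _
      have hNd : 0 < ∑ i, (a i - b i)^2 := sq_sum_pos hne
      rw [hL, hL, hL, Q_ident S (1/2) (1/2) (by norm_num) a b,
        sq_ident (1/2) (1/2) (by norm_num) a b, hcs]
      nlinarith [mul_pos hε hNd,
        mul_nonneg (mul_nonneg hQd (sq_nonneg x)) (neg_nonneg.2 hM)]
    have hconv : ∀ a ∈ A, ∀ S1 ∈ B, ∀ S2 ∈ B, ∀ t : ℝ, 0 < t → t ≤ 1 →
        L a ((1-t) • S1 + t • S2) - ε * ∑ i, (a i)^2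
          ≤ (1-t) * (L a S1 - ε * ∑ i, (a i)^2) + t * (L a S2 - ε * ∑ i, (a i)^2) := by
      intro a ha S1 hS1 S2 hS2 t ht0 ht1
      have hF' : F ((1-t) • S1 + t • S2) ≤ (1-t) * F S1 + t * F S2 :=
        hFconv.2 hS1 hS2 (by linarith) ht0.le (by ring)
      have hFm := mul_le_mul_of_nonneg_left hF' hlam.le
      rw [hL, hL, hL, Q_lin S1 S2 (1-t) t a]
      nlinarith [hFm]
    obtain ⟨an, han, Sn, hSn, h1, h2⟩ :=
      saddle_of_strict hA hAcomp hAconv hB hBcomp hBconv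
        (fun a S => L a S - ε * ∑ i, (a i)^2) hfc hconc
        (fun a ha S1 hS1 S2 hS2 t ht0 ht1 => hconv a ha S1 hS1 S2 hS2 t ht0 ht1)
    exact ⟨an, han, Sn, hSn, h1, fun S hS => h2 S hS⟩
  choose aseq haseqA Sseq hSseqB hP1 hP2 using hsaddle
  -- pass to the limit
  obtain ⟨qstar, hqstar, φ, hφ, hφtend⟩ :=
    (hAcomp.prod hBcomp).tendsto_subseq (x := fun n => (aseq n, Sseq n))
      (fun n => Set.mk_mem_prod (haseqA n) (hSseqB n))
  obtain ⟨astar, Sstar⟩ := qstar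
  obtain ⟨hastarA, hSstarB⟩ := hqstar
  have hatend : Filter.Tendsto (fun n => aseq (φ n)) Filter.atTop (nhds astar) :=
    (continuous_fst.tendsto _).comp hφtend
  have hStend : Filter.Tendsto (fun n => Sseq (φ n)) Filter.atTop (nhds Sstar) :=
    (continuous_snd.tendsto _).comp hφtend
  have honediv : Filter.Tendsto (fun n : ℕ => 1/((φ n : ℝ)+1)) Filter.atTop (nhds 0) :=
    tendsto_one_div_add_atTop_nhds_zero_nat.comp hφ.tendsto_atTop
  have hjointLim : Filter.Tendsto (fun n => L (aseq (φ n)) (Sseq (φ n))) Filter.atTop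
      (nhds (L astar Sstar)) := by
    have hq : Filter.Tendsto (fun n => (aseq (φ n), Sseq (φ n))) Filter.atTop
        (nhdsWithin (astar, Sstar) (A ×ˢ B)) :=
      tendsto_nhdsWithin_iff.2 ⟨hatend.prodMk_nhds hStend,
        Filter.Eventually.of_forall fun n => Set.mk_mem_prod (haseqA _) (hSseqB _)⟩
    exact ((hLc (astar, Sstar) (Set.mk_mem_prod hastarA hSstarB)).tendsto).comp hq
  have hsaddle1 : ∀ a ∈ A, L a Sstar ≤ L astar Sstar := by
    intro a ha
    have hbound : ∀ n, L a (Sseq (φ n))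
        ≤ L (aseq (φ n)) (Sseq (φ n)) + (1/((φ n : ℝ)+1)) * ∑ i, (a i)^2 := by
      intro n
      have h := hP1 (φ n) a ha
      have hNn : (0:ℝ) ≤ ∑ i, (aseq (φ n) i)^2 :=
        Finset.sum_nonneg fun i _ => sq_nonneg _
      have hε : (0:ℝ) ≤ 1/((φ n : ℝ)+1) := by positivity
      nlinarith [mul_nonneg hε hNn]
    have htend1 : Filter.Tendsto (fun n => L a (Sseq (φ n))) Filter.atTop
        (nhds (L a Sstar)) := by
      refine ((hcS a ha Sstar hSstarB).tendsto).comp ?_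
      exact tendsto_nhdsWithin_iff.2 ⟨hStend,
        Filter.Eventually.of_forall fun n => hSseqB (φ n)⟩
    have htend2 : Filter.Tendsto
        (fun n => L (aseq (φ n)) (Sseq (φ n)) + (1/((φ n : ℝ)+1)) * ∑ i, (a i)^2)
        Filter.atTop (nhds (L astar Sstar)) := by
      have := hjointLim.add (honediv.mul_const (∑ i, (a i)^2))
      simpa using this
    exact le_of_tendsto_of_tendsto' htend1 htend2 hbound
  have hsaddle2 : ∀ S ∈ B, L astar Sstar ≤ L astar S := by
    intro S hS
    have hbound : ∀ n, L (aseq (φ n)) (Sseq (φ n)) ≤ L (aseq (φ n)) S := by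
      intro n
      have h := hP2 (φ n) S hS
      linarith
    have htend2 : Filter.Tendsto (fun n => L (aseq (φ n)) S) Filter.atTop
        (nhds (L astar S)) := by
      have hq : Filter.Tendsto (fun n => (aseq (φ n), S)) Filter.atTop
          (nhdsWithin (astar, S) (A ×ˢ B)) :=
        tendsto_nhdsWithin_iff.2 ⟨hatend.prodMk_nhds tendsto_const_nhds,
          Filter.Eventually.of_forall fun n => Set.mk_mem_prod (haseqA _) hS⟩
      exact ((hLc (astar, S) (Set.mk_mem_prod hastarA hS)).tendsto).comp hq
    exact le_of_tendsto_of_tendsto' hjointLim htend2 hbound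
  -- sup/inf equalities
  have hbddA : ∀ S ∈ B, BddAbove ((fun a => L a S) '' A) := fun S hS =>
    (hAcomp.image_of_continuousOn (hca S hS)).bddAbove
  have hbddB : ∀ a ∈ A, BddBelow ((fun S => L a S) '' B) := fun a ha =>
    (hBcomp.image_of_continuousOn (hcS a ha)).bddBelow
  have hΦeq : sSup ((fun a => L a Sstar) '' A) = L astar Sstar := by
    refine IsGreatest.csSup_eq ⟨Set.mem_image_of_mem _ hastarA, ?_⟩
    rintro y ⟨a, ha, rfl⟩
    exact hsaddle1 a ha
  have hΦge : ∀ S ∈ B, L astar Sstar ≤ sSup ((fun a => L a S) '' A) := fun S hS =>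
    (hsaddle2 S hS).trans (le_csSup (hbddA S hS) (Set.mem_image_of_mem _ hastarA))
  have hΨeq : sInf ((fun S => L astar S) '' B) = L astar Sstar := by
    refine IsLeast.csInf_eq ⟨Set.mem_image_of_mem _ hSstarB, ?_⟩
    rintro y ⟨S, hS, rfl⟩
    exact hsaddle2 S hS
  have hΨle : ∀ a ∈ A, sInf ((fun S => L a S) '' B) ≤ L astar Sstar := fun a ha =>
    (csInf_le (hbddB a ha) (Set.mem_image_of_mem _ hSstarB)).trans (hsaddle1 a ha)
  refine ⟨astar, hastarA, Sstar, hSstarB, hsaddle1, hsaddle2, ?_, ?_⟩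
  · refine le_antisymm ?_ ?_
    · exact csInf_le ⟨L astar Sstar, by rintro y ⟨S, hS, rfl⟩; exact hΦge S hS⟩
        ⟨Sstar, hSstarB, hΦeq⟩
    · refine le_csInf (hB.image _) ?_
      rintro y ⟨S, hS, rfl⟩
      exact hΦge S hS
  · refine le_antisymm ?_ ?_
    · refine csSup_le (hA.image _) ?_
      rintro y ⟨a, ha, rfl⟩
      exact hΨle a ha
    · exact le_csSup ⟨L astar Sstar, by rintro y ⟨a, ha, rfl⟩; exact hΨle a ha⟩
        ⟨astar, hastarA, hΨeq⟩
end

section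
/- Explicit formula for the positive root of the optimality quartic: for σ0 > 0 and c > 0, set D = (√3·√(27σ0⁴c² + 256c³) − 9σ0²c)^{1/3} (the real cube root of a positive number, since 3·(27σ0⁴c² + 256c³) > 81σ0⁴c²), and set R = σ0²/4 + D/(2^{1/3}·3^{2/3}) − 4·(2/3)^{1/3}·c/D. Then R > 0, the quantity S = σ0²/2 − D/(2^{1/3}·3^{2/3}) + 4·(2/3)^{1/3}·c/D + σ0³/(4√R) is nonnegative, and the number σ̂ = σ0/4 + (1/2)√R + (1/2)√S satisfies σ̂ > 0 and σ̂⁴ − σ0·σ̂³ − c = 0. -/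
private lemma cube_inj {x y : ℝ} (hx : 0 < x) (hy : 0 < y) (h : x ^ 3 = y ^ 3) : x = y := by
  rcases lt_trichotomy x y with h1 | h1 | h1
  · exact absurd h (ne_of_lt (pow_lt_pow_left₀ h1 hx.le (by norm_num)))
  · exact h1
  · exact absurd h.symm (ne_of_lt (pow_lt_pow_left₀ h1 hy.le (by norm_num)))

set_option maxHeartbeats 1000000

/-- Explicit formula for the positive root of the optimality quartic
`σ⁴ − σ0·σ³ − c = 0` (for `σ0 > 0`, `c > 0`), in terms of the real cube root `D`,
the radicands `R` and `S`, via `σ̂ = σ0/4 + (1/2)√R + (1/2)√S`. -/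
theorem quartic_positive_root_explicit (σ0 c : ℝ) (hσ0 : 0 < σ0) (hc : 0 < c)
    (D R S σhat : ℝ)
    (hD : D = (Real.sqrt 3 * Real.sqrt (27 * σ0 ^ 4 * c ^ 2 + 256 * c ^ 3)
        - 9 * σ0 ^ 2 * c) ^ ((1 : ℝ) / 3))
    (hR : R = σ0 ^ 2 / 4 + D / ((2 : ℝ) ^ ((1 : ℝ) / 3) * (3 : ℝ) ^ ((2 : ℝ) / 3))
        - 4 * ((2 : ℝ) / 3) ^ ((1 : ℝ) / 3) * c / D)
    (hS : S = σ0 ^ 2 / 2 - D / ((2 : ℝ) ^ ((1 : ℝ) / 3) * (3 : ℝ) ^ ((2 : ℝ) / 3))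
        + 4 * ((2 : ℝ) / 3) ^ ((1 : ℝ) / 3) * c / D
        + σ0 ^ 3 / (4 * Real.sqrt R))
    (hσhat : σhat = σ0 / 4 + (1 / 2) * Real.sqrt R + (1 / 2) * Real.sqrt S) :
    0 < R ∧ 0 ≤ S ∧ 0 < σhat ∧ σhat ^ 4 - σ0 * σhat ^ 3 - c = 0 := by
  -- combine the square roots
  have hcomb : Real.sqrt 3 * Real.sqrt (27 * σ0 ^ 4 * c ^ 2 + 256 * c ^ 3)
      = Real.sqrt (81 * σ0 ^ 4 * c ^ 2 + 768 * c ^ 3) := by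
    rw [← Real.sqrt_mul (by norm_num : (0:ℝ) ≤ 3)]
    congr 1; ring
  set u : ℝ := Real.sqrt (81 * σ0 ^ 4 * c ^ 2 + 768 * c ^ 3) - 9 * σ0 ^ 2 * c with hu_def
  clear_value u
  have hX : (0:ℝ) ≤ 81 * σ0 ^ 4 * c ^ 2 + 768 * c ^ 3 := by positivity
  have hu_pos : 0 < u := by
    have : 9 * σ0 ^ 2 * c < Real.sqrt (81 * σ0 ^ 4 * c ^ 2 + 768 * c ^ 3) := by
      rw [Real.lt_sqrt (by positivity)]
      have e : (9 * σ0 ^ 2 * c) ^ 2 = 81 * σ0 ^ 4 * c ^ 2 := by ring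
      linarith [e, show (0:ℝ) < 768 * c ^ 3 by positivity]
    simpa [hu_def, sub_pos] using this
  have hu2 : u ^ 2 = 768 * c ^ 3 - 18 * σ0 ^ 2 * c * u := by
    have h1 : (u + 9 * σ0 ^ 2 * c) ^ 2 = 81 * σ0 ^ 4 * c ^ 2 + 768 * c ^ 3 := by
      rw [show u + 9 * σ0 ^ 2 * c = Real.sqrt (81 * σ0 ^ 4 * c ^ 2 + 768 * c ^ 3) by
        rw [hu_def]; ring]
      exact Real.sq_sqrt hX
    linear_combination h1
  have hD' : D = u ^ ((1:ℝ)/3) := by rw [hD, hcomb, hu_def]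
  have hD_pos : 0 < D := by rw [hD']; exact Real.rpow_pos_of_pos hu_pos _
  have hD3 : D ^ 3 = u := by
    rw [hD', ← Real.rpow_natCast (u ^ ((1:ℝ)/3)) 3, ← Real.rpow_mul hu_pos.le]
    norm_num
  set A : ℝ := (2 : ℝ) ^ ((1 : ℝ) / 3) * (3 : ℝ) ^ ((2 : ℝ) / 3) with hA_def
  set B0 : ℝ := ((2 : ℝ) / 3) ^ ((1 : ℝ) / 3) with hB0_def
  have hA_pos : 0 < A := by
    rw [hA_def]; positivity
  have hA3 : A ^ 3 = 18 := by
    rw [hA_def, mul_pow, ← Real.rpow_natCast ((2:ℝ) ^ ((1:ℝ)/3)) 3,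
      ← Real.rpow_natCast ((3:ℝ) ^ ((2:ℝ)/3)) 3,
      ← Real.rpow_mul (by norm_num : (0:ℝ) ≤ 2), ← Real.rpow_mul (by norm_num : (0:ℝ) ≤ 3)]
    norm_num
  have hB0_pos : 0 < B0 := by rw [hB0_def]; positivity
  have hB03 : B0 ^ 3 = 2 / 3 := by
    rw [hB0_def, ← Real.rpow_natCast (((2:ℝ)/3) ^ ((1:ℝ)/3)) 3,
      ← Real.rpow_mul (by norm_num : (0:ℝ) ≤ 2/3)]
    norm_num
  have hB0A : B0 = A / 3 := by
    refine cube_inj hB0_pos (by positivity) ?_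
    rw [hB03, div_pow, hA3]; norm_num
  set y : ℝ := D / A - 4 * B0 * c / D with hy_def
  clear_value y
  have hAne : A ≠ 0 := ne_of_gt hA_pos
  have hDne : D ≠ 0 := ne_of_gt hD_pos
  have hune : u ≠ 0 := ne_of_gt hu_pos
  have hP3 : (D / A) ^ 3 = u / 18 := by rw [div_pow, hD3, hA3]
  have hQ3 : (4 * B0 * c / D) ^ 3 = 128 * c ^ 3 / (3 * u) := by
    have e : (4 * B0 * c / D) ^ 3 = 64 * B0 ^ 3 * c ^ 3 / D ^ 3 := by ring
    rw [e, hB03, hD3]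
    field_simp
    ring
  have hPQ : (D / A) * (4 * B0 * c / D) = 4 * c / 3 := by
    rw [hB0A]; field_simp
  have hu_frac : u / 18 - 128 * c ^ 3 / (3 * u) = -(σ0 ^ 2 * c) := by
    rw [div_sub_div _ _ (by norm_num : (18:ℝ) ≠ 0) (by positivity : (3:ℝ) * u ≠ 0),
      div_eq_iff (by positivity : (18:ℝ) * (3 * u) ≠ 0)]
    linear_combination 3 * hu2
  have hycubic : y ^ 3 + 4 * c * y + σ0 ^ 2 * c = 0 := by
    have e : y ^ 3 = (D / A) ^ 3 - (4 * B0 * c / D) ^ 3 - 3 * ((D / A) * (4 * B0 * c / D)) * y := by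
      rw [hy_def]; ring
    rw [e, hP3, hQ3, hPQ]
    linear_combination hu_frac
  have hRy : R = σ0 ^ 2 / 4 + y := by rw [hR, hy_def]; ring
  have hy_neg : y < 0 := by
    by_contra h
    push_neg at h
    linarith [pow_nonneg h 3, mul_nonneg hc.le h, mul_pos (mul_pos hσ0 hσ0) hc, hycubic]
  have hR_pos : 0 < R := by
    rw [hRy]
    by_contra h
    push_neg at h
    have hq : 0 ≤ y ^ 2 - σ0 ^ 2 * y / 4 + σ0 ^ 4 / 16 + 4 * c := by
      linarith [sq_nonneg (y - σ0 ^ 2 / 8), pow_pos hσ0 4, hc]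
    have hprod : 0 ≤ (-(σ0 ^ 2 / 4 + y)) * (y ^ 2 - σ0 ^ 2 * y / 4 + σ0 ^ 4 / 16 + 4 * c) :=
      mul_nonneg (by linarith) hq
    linarith [pow_pos hσ0 6, hprod, hycubic]
  set r : ℝ := Real.sqrt R with hr_def
  clear_value r
  have hr_pos : 0 < r := by rw [hr_def]; exact Real.sqrt_pos.mpr hR_pos
  have hr2 : r ^ 2 = σ0 ^ 2 / 4 + y := by rw [hr_def, Real.sq_sqrt hR_pos.le, hRy]
  have hSy : S = σ0 ^ 2 / 2 - y + σ0 ^ 3 / (4 * r) := by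
    rw [hS, hy_def]; ring
  have hS_pos : 0 < S := by
    rw [hSy]
    have h1 : 0 < σ0 ^ 3 / (4 * r) := by positivity
    linarith [sq_nonneg σ0, hy_neg, h1]
  set s : ℝ := Real.sqrt S with hs_def
  clear_value s
  have hs_nonneg : 0 ≤ s := by rw [hs_def]; exact Real.sqrt_nonneg S
  have hs2 : s ^ 2 = S := by rw [hs_def, Real.sq_sqrt hS_pos.le]
  have hs2' : 4 * r * s ^ 2 = 2 * σ0 ^ 2 * r - 4 * r * y + σ0 ^ 3 := by
    rw [hs2, hSy]
    field_simp
    ring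
  have hσhat' : σhat = σ0 / 4 + (1 / 2) * r + (1 / 2) * s := hσhat
  have hσhat_pos : 0 < σhat := by
    rw [hσhat']
    linarith [hr_pos, hs_nonneg, hσ0]
  have key : 16 * r ^ 2 * ((σ0 / 4 + (1 / 2) * r + (1 / 2) * s) ^ 4
      - σ0 * (σ0 / 4 + (1 / 2) * r + (1 / 2) * s) ^ 3 - c) = 0 := by
    linear_combination
      ((-1/4) * r * y + (1/4) * r * s ^ 2 + r ^ 2 * s + (3/2) * r ^ 3
        - (1/4) * σ0 ^ 2 * r + (1/16) * σ0 ^ 3) * hs2'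
      + ((-4) * y ^ 2 - 5 * r ^ 2 * y + 4 * r ^ 3 * s + r ^ 4 - 16 * c
        + σ0 ^ 2 * y + (7/4) * σ0 ^ 2 * r ^ 2 + (1/2) * σ0 ^ 3 * r - (1/4) * σ0 ^ 4) * hr2
      - 4 * hycubic
  have hquartic : σhat ^ 4 - σ0 * σhat ^ 3 - c = 0 := by
    rw [hσhat']
    rcases mul_eq_zero.mp key with h | h
    · exfalso; have : (0:ℝ) < 16 * r ^ 2 := by positivity
      linarith
    · exact h
  exact ⟨hR_pos, hS_pos.le, hσhat_pos, hquartic⟩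
end

section
/- First-order optimality conditions for the logarithmic-utility robust problem: let σ̂ > 0 satisfy σ̂⁴ − σ0·σ̂³ − (μ−r)²/(2λ0) = 0 and set α̂ = (μ−r)/σ̂². Then (α̂, σ̂) is a critical point of h, i.e. ∂h/∂α(α̂,σ̂) = 0 and ∂h/∂σ(α̂,σ̂) = 0; equivalently α̂ = (μ−r)/σ̂² and −(1/2)α̂² + λ0·(1 − σ0/σ̂) = 0. -/
/-- First-order optimality conditions for the logarithmic-utility robust problem:
if `σ̂ > 0` solves the quartic `σ̂⁴ − σ0·σ̂³ − (μ−r)²/(2lam0) = 0` and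
`α̂ = (μ−r)/σ̂²`, then `(α̂, σ̂)` is a critical point of
`h(α,σ) = α(μ−r) + r − (1/2)α²σ² + lam0(σ−σ0)²`; equivalently `α̂ = (μ−r)/σ̂²` and
`−(1/2)α̂² + lam0(1 − σ0/σ̂) = 0`. -/
theorem first_order_conditions_log_utility (μ r lam0 σ0 : ℝ) (hμr : μ ≠ r)
    (hlam0 : 0 < lam0) (hσ0 : 0 ≤ σ0)
    (h : ℝ → ℝ → ℝ)
    (hh : ∀ α σ, h α σ = α * (μ - r) + r - (1 / 2) * α ^ 2 * σ ^ 2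
        + lam0 * (σ - σ0) ^ 2)
    (σhat αhat : ℝ) (hσhat : 0 < σhat)
    (hquartic : σhat ^ 4 - σ0 * σhat ^ 3 - (μ - r) ^ 2 / (2 * lam0) = 0)
    (hαhat : αhat = (μ - r) / σhat ^ 2) :
    deriv (fun α => h α σhat) αhat = 0 ∧
    deriv (fun σ => h αhat σ) σhat = 0 ∧
    αhat = (μ - r) / σhat ^ 2 ∧
    -(1 / 2) * αhat ^ 2 + lam0 * (1 - σ0 / σhat) = 0 := by
  have hσne : σhat ≠ 0 := ne_of_gt hσhat
  have hlne : lam0 ≠ 0 := ne_of_gt hlam0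
  have hq : σhat ^ 4 - σ0 * σhat ^ 3 = (μ - r) ^ 2 / (2 * lam0) := by linarith
  have hq' : 2 * lam0 * (σhat ^ 4 - σ0 * σhat ^ 3) = (μ - r) ^ 2 := by
    field_simp at hq ⊢; linarith
  have key : -(1 / 2) * αhat ^ 2 + lam0 * (1 - σ0 / σhat) = 0 := by
    rw [hαhat]
    field_simp
    ring_nf
    ring_nf at hq'
    nlinarith [hq', sq_nonneg σhat]
  have hαd : HasDerivAt (fun α : ℝ => h α σhat) ((μ - r) - αhat * σhat ^ 2) αhat := by
    have this := ((((hasDerivAt_id αhat).mul_const (μ - r)).add_const r).sub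
        (((hasDerivAt_pow 2 αhat).const_mul (1 / 2)).mul_const (σhat ^ 2))).add_const
        (lam0 * (σhat - σ0) ^ 2)
    simp only [id] at this
    have h2 : (fun α : ℝ => h α σhat) = fun α : ℝ => α * (μ - r) + r
        - 1 / 2 * α ^ 2 * σhat ^ 2 + lam0 * (σhat - σ0) ^ 2 := by
      funext α; rw [hh]
    rw [h2]
    exact this.congr_deriv (by norm_num; left; ring)
  have hσd : HasDerivAt (fun σ : ℝ => h αhat σ)
      (-(αhat ^ 2 * σhat) + lam0 * (2 * (σhat - σ0))) σhat := by
    have this := ((hasDerivAt_const σhat (αhat * (μ - r) + r)).sub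
        ((hasDerivAt_pow 2 σhat).const_mul (1 / 2 * αhat ^ 2))).add
        ((((hasDerivAt_id σhat).sub_const σ0).pow 2).const_mul lam0)
    simp only [id] at this
    have h2 : (fun σ : ℝ => h αhat σ) = fun σ : ℝ => αhat * (μ - r) + r
        - 1 / 2 * αhat ^ 2 * σ ^ 2 + lam0 * (σ - σ0) ^ 2 := by
      funext σ; rw [hh]
    rw [h2]
    exact this.congr_deriv (by norm_num; ring)
  refine ⟨?_, ?_, hαhat, key⟩
  · rw [hαd.deriv, hαhat]; field_simp; ring
  · rw [hσd.deriv]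
    have := key
    have hs : lam0 * (1 - σ0 / σhat) = lam0 * (σhat - σ0) / σhat := by
      field_simp
    rw [hs] at this
    field_simp at this
    nlinarith [this]
end

section
/- Saddle-point property of the analytical solution: let σ̂ > 0 satisfy σ̂⁴ − σ0·σ̂³ − (μ−r)²/(2λ0) = 0 and set α̂ = (μ−r)/σ̂². Then (α̂, σ̂) is a saddle point of h: h(α, σ̂) ≤ h(α̂, σ̂) ≤ h(α̂, σ) for every α ∈ ℝ and every σ ∈ ℝ. -/
/-!
The first-order conditions of `h` at `(α̂, σ̂)` are `α̂ σ̂² = μ - r` and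
`α̂² σ̂ = 2 λ0 (σ̂ - σ0)`; eliminating `α̂` gives the quartic. The function `h(·, σ̂)` is a concave
quadratic, hence maximal at its critical point `α̂`. The function `h(α̂, ·)` is a quadratic whose
leading coefficient `λ0 - α̂²/2 = λ0 σ0 / σ̂` is nonnegative, hence minimal at its critical
point `σ̂`.
-/

lemma mul_sub_half_sq_mul_sq_le {a s c : ℝ} (ha : a * s ^ 2 = c) (α : ℝ) :
    α * c - 1 / 2 * α ^ 2 * s ^ 2 ≤ a * c - 1 / 2 * a ^ 2 * s ^ 2 := by
  subst ha
  nlinarith [mul_nonneg (sq_nonneg s) (sq_nonneg (α - a))]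

lemma sq_mul_eq_of_quartic {a s c σ0 lam : ℝ} (hs : s ≠ 0) (hlam : lam ≠ 0)
    (hquartic : s ^ 4 - σ0 * s ^ 3 - c ^ 2 / (2 * lam) = 0) (ha : a = c / s ^ 2) :
    a ^ 2 * s = 2 * lam * (s - σ0) := by
  have hc : c ^ 2 = 2 * lam * s ^ 3 * (s - σ0) := by
    field_simp at hquartic
    linear_combination -hquartic
  rw [ha, div_pow, hc]
  field_simp

lemma neg_half_sq_mul_sq_add_mul_sq_le {a s σ0 lam : ℝ} (hs : 0 < s) (hσ0 : 0 ≤ σ0)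
    (hlam : 0 ≤ lam) (hcrit : a ^ 2 * s = 2 * lam * (s - σ0)) (σ : ℝ) :
    -(1 / 2) * a ^ 2 * s ^ 2 + lam * (s - σ0) ^ 2
      ≤ -(1 / 2) * a ^ 2 * σ ^ 2 + lam * (σ - σ0) ^ 2 := by
  have key : s * ((-(1 / 2) * a ^ 2 * σ ^ 2 + lam * (σ - σ0) ^ 2)
      - (-(1 / 2) * a ^ 2 * s ^ 2 + lam * (s - σ0) ^ 2)) = lam * σ0 * (σ - s) ^ 2 := by
    linear_combination (s ^ 2 - σ ^ 2) / 2 * hcrit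
  have hnonneg : 0 ≤ lam * σ0 * (σ - s) ^ 2 := by positivity
  rw [← key] at hnonneg
  linarith [nonneg_of_mul_nonneg_right hnonneg hs]

theorem saddle_point_log_utility_general (μ r lam0 σ0 : ℝ)
    (hlam0 : 0 < lam0) (hσ0 : 0 ≤ σ0)
    (h : ℝ → ℝ → ℝ)
    (hh : ∀ α σ, h α σ = α * (μ - r) + r - (1 / 2) * α ^ 2 * σ ^ 2
        + lam0 * (σ - σ0) ^ 2)
    (σhat αhat : ℝ) (hσhat : 0 < σhat)
    (hquartic : σhat ^ 4 - σ0 * σhat ^ 3 - (μ - r) ^ 2 / (2 * lam0) = 0)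
    (hαhat : αhat = (μ - r) / σhat ^ 2) :
    (∀ α : ℝ, h α σhat ≤ h αhat σhat) ∧ (∀ σ : ℝ, h αhat σhat ≤ h αhat σ) := by
  have hcrit_α : αhat * σhat ^ 2 = μ - r := by
    rw [hαhat]
    field_simp
  have hcrit_σ : αhat ^ 2 * σhat = 2 * lam0 * (σhat - σ0) :=
    sq_mul_eq_of_quartic hσhat.ne' hlam0.ne' hquartic hαhat
  refine ⟨fun α => ?_, fun σ => ?_⟩
  · simp only [hh]
    linarith [mul_sub_half_sq_mul_sq_le hcrit_α α]
  · simp only [hh]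
    linarith [neg_half_sq_mul_sq_add_mul_sq_le hσhat hσ0 hlam0.le hcrit_σ σ]

/-- Saddle-point property of the analytical solution: if `σ̂ > 0` solves
`σ̂⁴ − σ0·σ̂³ − (μ−r)²/(2lam0) = 0` and `α̂ = (μ−r)/σ̂²`, then `(α̂, σ̂)` is a saddle
point of `h(α,σ) = α(μ−r) + r − (1/2)α²σ² + lam0(σ−σ0)²`. -/
theorem saddle_point_log_utility (μ r lam0 σ0 : ℝ) (hμr : μ ≠ r)
    (hlam0 : 0 < lam0) (hσ0 : 0 ≤ σ0)
    (h : ℝ → ℝ → ℝ)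
    (hh : ∀ α σ, h α σ = α * (μ - r) + r - (1 / 2) * α ^ 2 * σ ^ 2
        + lam0 * (σ - σ0) ^ 2)
    (σhat αhat : ℝ) (hσhat : 0 < σhat)
    (hquartic : σhat ^ 4 - σ0 * σhat ^ 3 - (μ - r) ^ 2 / (2 * lam0) = 0)
    (hαhat : αhat = (μ - r) / σhat ^ 2) :
    (∀ α : ℝ, h α σhat ≤ h αhat σhat) ∧ (∀ σ : ℝ, h αhat σhat ≤ h αhat σ) :=
  saddle_point_log_utility_general μ r lam0 σ0 hlam0 hσ0 h hh σhat αhat hσhat hquartic hαhat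
end

section
/- Minimax equality for the logarithmic-utility integrand: let σ̂ > 0 satisfy σ̂⁴ − σ0·σ̂³ − (μ−r)²/(2λ0) = 0 and set α̂ = (μ−r)/σ̂². Then, as extended real numbers, sup_{α∈ℝ} inf_{σ∈ℝ} h(α,σ) = inf_{σ∈ℝ} sup_{α∈ℝ} h(α,σ) = h(α̂, σ̂). -/
/-!
The point `(α̂, σ̂)` is a saddle point of `h`. For fixed `σ`, `h(·, σ)` is a concave parabola, and
`α̂ σ̂² = μ − r` puts its vertex at `α̂` when `σ = σ̂`. The quartic is the first-order condition
`α̂² σ̂ = 2 λ0 (σ̂ − σ0)` in `σ`; it makes the leading coefficient of `h(α̂, ·)` equal to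
`λ0 σ0 / σ̂ ≥ 0`, so `h(α̂, ·)` is a convex parabola with vertex `σ̂`. A saddle point forces
`sup inf = inf sup` in any complete lattice.
-/

open Set

theorem iSup_iInf_eq_and_iInf_iSup_eq_of_isSaddlePoint {ι κ γ : Type*} [CompleteLattice γ]
    {f : ι → κ → γ} {i₀ : ι} {j₀ : κ} (hmin : IsMinOn (f i₀) univ j₀)
    (hmax : IsMaxOn (f · j₀) univ i₀) :
    ⨆ i, ⨅ j, f i j = f i₀ j₀ ∧ ⨅ j, ⨆ i, f i j = f i₀ j₀ := by
  have hlower : f i₀ j₀ ≤ ⨆ i, ⨅ j, f i j :=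
    (le_iInf fun j => isMinOn_univ_iff.1 hmin j).trans (le_iSup (fun i => ⨅ j, f i j) i₀)
  have hupper : ⨅ j, ⨆ i, f i j ≤ f i₀ j₀ :=
    (iInf_le (fun j => ⨆ i, f i j) j₀).trans (iSup_le fun i => isMaxOn_univ_iff.1 hmax i)
  have hminimax := iSup_iInf_le_iInf_iSup f
  exact ⟨le_antisymm (hminimax.trans hupper) hlower, le_antisymm hupper (hlower.trans hminimax)⟩

noncomputable def logUtilityIntegrand (μ r lam0 σ0 α σ : ℝ) : ℝ :=
  α * (μ - r) + r - (1 / 2) * α ^ 2 * σ ^ 2 + lam0 * (σ - σ0) ^ 2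

section LogUtilityIntegrand

variable {μ r lam0 σ0 : ℝ}

theorem isMaxOn_logUtilityIntegrand_alpha {αhat σhat : ℝ} (hα : αhat * σhat ^ 2 = μ - r) :
    IsMaxOn (logUtilityIntegrand μ r lam0 σ0 · σhat) univ αhat := by
  refine isMaxOn_univ_iff.2 fun α => ?_
  have hgap : logUtilityIntegrand μ r lam0 σ0 αhat σhat - logUtilityIntegrand μ r lam0 σ0 α σhat
      = (1 / 2) * σhat ^ 2 * (α - αhat) ^ 2 := by
    unfold logUtilityIntegrand
    rw [← hα]
    ring
  have hgap_nonneg : 0 ≤ (1 / 2) * σhat ^ 2 * (α - αhat) ^ 2 := by positivity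
  linarith

theorem sq_mul_eq_of_quartic_s10 {αhat σhat : ℝ} (hlam0 : lam0 ≠ 0) (hσhat : σhat ≠ 0)
    (hquartic : σhat ^ 4 - σ0 * σhat ^ 3 - (μ - r) ^ 2 / (2 * lam0) = 0)
    (hα : αhat * σhat ^ 2 = μ - r) :
    αhat ^ 2 * σhat = 2 * lam0 * (σhat - σ0) := by
  have hcubic : (αhat ^ 2 * σhat) * σhat ^ 3 = (2 * lam0 * (σhat - σ0)) * σhat ^ 3 := by
    field_simp at hquartic
    linear_combination (-1 : ℝ) * hquartic + (αhat * σhat ^ 2 + (μ - r)) * hα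
  exact mul_right_cancel₀ (pow_ne_zero 3 hσhat) hcubic

theorem isMinOn_logUtilityIntegrand_sigma {αhat σhat : ℝ} (hlam0 : 0 ≤ lam0) (hσ0 : 0 ≤ σ0)
    (hσhat : 0 < σhat) (hfoc : αhat ^ 2 * σhat = 2 * lam0 * (σhat - σ0)) :
    IsMinOn (logUtilityIntegrand μ r lam0 σ0 αhat) univ σhat := by
  refine isMinOn_univ_iff.2 fun σ => ?_
  have hgap : σhat * (logUtilityIntegrand μ r lam0 σ0 αhat σ
      - logUtilityIntegrand μ r lam0 σ0 αhat σhat) = lam0 * σ0 * (σ - σhat) ^ 2 := by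
    unfold logUtilityIntegrand
    linear_combination (-(1 / 2) * (σ ^ 2 - σhat ^ 2)) * hfoc
  have hgap_nonneg : 0 ≤ lam0 * σ0 * (σ - σhat) ^ 2 :=
    mul_nonneg (mul_nonneg hlam0 hσ0) (sq_nonneg _)
  exact sub_nonneg.1 (nonneg_of_mul_nonneg_right (hgap ▸ hgap_nonneg) hσhat)

end LogUtilityIntegrand

theorem minimax_log_utility_general (μ r lam0 σ0 : ℝ)
    (hlam0 : 0 < lam0) (hσ0 : 0 ≤ σ0)
    (h : ℝ → ℝ → ℝ)
    (hh : ∀ α σ, h α σ = α * (μ - r) + r - (1 / 2) * α ^ 2 * σ ^ 2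
        + lam0 * (σ - σ0) ^ 2)
    (σhat αhat : ℝ) (hσhat : 0 < σhat)
    (hquartic : σhat ^ 4 - σ0 * σhat ^ 3 - (μ - r) ^ 2 / (2 * lam0) = 0)
    (hαhat : αhat = (μ - r) / σhat ^ 2) :
    (⨆ α : ℝ, ⨅ σ : ℝ, (h α σ : EReal)) = (⨅ σ : ℝ, ⨆ α : ℝ, (h α σ : EReal)) ∧
    (⨆ α : ℝ, ⨅ σ : ℝ, (h α σ : EReal)) = (h αhat σhat : EReal) := by
  obtain rfl : h = logUtilityIntegrand μ r lam0 σ0 := funext fun α => funext (hh α)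
  have hα : αhat * σhat ^ 2 = μ - r := by
    rw [hαhat]
    field_simp
  have hfoc := sq_mul_eq_of_quartic_s10 hlam0.ne' hσhat.ne' hquartic hα
  have hmin := (isMinOn_logUtilityIntegrand_sigma (μ := μ) (r := r) hlam0.le hσ0 hσhat
    hfoc).comp_mono EReal.coe_strictMono.monotone
  have hmax := (isMaxOn_logUtilityIntegrand_alpha (lam0 := lam0) (σ0 := σ0) hα).comp_mono
    EReal.coe_strictMono.monotone
  obtain ⟨hsupinf, hinfsup⟩ := iSup_iInf_eq_and_iInf_iSup_eq_of_isSaddlePoint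
    (f := fun α σ => (logUtilityIntegrand μ r lam0 σ0 α σ : EReal)) hmin hmax
  exact ⟨hsupinf.trans hinfsup.symm, hsupinf⟩

/-- Minimax equality for the logarithmic-utility integrand: with `σ̂ > 0` solving
`σ̂⁴ − σ0·σ̂³ − (μ−r)²/(2lam0) = 0` and `α̂ = (μ−r)/σ̂²`, one has, in the extended reals,
`sup_α inf_σ h(α,σ) = inf_σ sup_α h(α,σ) = h(α̂,σ̂)`. -/
theorem minimax_log_utility (μ r lam0 σ0 : ℝ) (hμr : μ ≠ r)
    (hlam0 : 0 < lam0) (hσ0 : 0 ≤ σ0)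
    (h : ℝ → ℝ → ℝ)
    (hh : ∀ α σ, h α σ = α * (μ - r) + r - (1 / 2) * α ^ 2 * σ ^ 2
        + lam0 * (σ - σ0) ^ 2)
    (σhat αhat : ℝ) (hσhat : 0 < σhat)
    (hquartic : σhat ^ 4 - σ0 * σhat ^ 3 - (μ - r) ^ 2 / (2 * lam0) = 0)
    (hαhat : αhat = (μ - r) / σhat ^ 2) :
    (⨆ α : ℝ, ⨅ σ : ℝ, (h α σ : EReal)) = (⨅ σ : ℝ, ⨆ α : ℝ, (h α σ : EReal)) ∧
    (⨆ α : ℝ, ⨅ σ : ℝ, (h α σ : EReal)) = (h αhat σhat : EReal) :=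
  minimax_log_utility_general μ r lam0 σ0 hlam0 hσ0 h hh σhat αhat hσhat hquartic hαhat
end

section
/- Closed-form reduction of the penalized Hamiltonian: fix λ0 > 0, r ∈ ℝ, μ ∈ ℝ with μ ≠ r, x ∈ ℝ with x ≠ 0, p > 0 and M < 0, and define Ψ(s,a) = a(μ−r)·x·p + r·x·p + (1/2)a²·s·x²·M + λ0·s² for s > 0 and a ∈ ℝ. Then inf_{s>0} sup_{a∈ℝ} Ψ(s,a) = C·p^{4/3}·(−M)^{−2/3} + r·x·p, where C = 3·2^{−4/3}·λ0^{1/3}·|μ−r|^{4/3}; moreover the infimum is attained at ŝ = ((μ−r)²·p²/(4λ0·(−M)))^{1/3}, and for each s > 0 the inner supremum is attained at a = −(μ−r)·x·p/(s·x²·M). -/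
/-- Closed-form reduction of the penalized Hamiltonian: for
`Ψ(s,a) = a(μ−r)xp + rxp + (1/2)a²sx²M + λ0 s²` with `λ0 > 0`, `μ ≠ r`, `x ≠ 0`,
`p > 0`, `M < 0`, one has
`inf_{s>0} sup_{a∈ℝ} Ψ(s,a) = C·p^{4/3}·(−M)^{−2/3} + rxp` with
`C = 3·2^{−4/3}·λ0^{1/3}·|μ−r|^{4/3}`; the infimum is attained at
`ŝ = ((μ−r)²p²/(4λ0(−M)))^{1/3}` and, for each `s > 0`, the inner supremum is
attained at `a = −(μ−r)xp/(sx²M)`. -/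
theorem penalized_hamiltonian_closed_form
    (lam0 r μ x p M : ℝ) (hlam0 : 0 < lam0) (hμr : μ ≠ r) (hx : x ≠ 0)
    (hp : 0 < p) (hM : M < 0)
    (Ψ : ℝ → ℝ → ℝ)
    (hΨ : ∀ s a, Ψ s a = a * (μ - r) * x * p + r * x * p
        + (1 / 2) * a ^ 2 * s * x ^ 2 * M + lam0 * s ^ 2)
    (C : ℝ)
    (hC : C = 3 * (2 : ℝ) ^ (-(4 : ℝ) / 3) * lam0 ^ ((1 : ℝ) / 3)
        * |μ - r| ^ ((4 : ℝ) / 3))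
    (shat : ℝ)
    (hshat : shat = ((μ - r) ^ 2 * p ^ 2 / (4 * lam0 * (-M))) ^ ((1 : ℝ) / 3)) :
    sInf ((fun s => sSup (Set.range fun a => Ψ s a)) '' {s : ℝ | 0 < s})
        = C * p ^ ((4 : ℝ) / 3) * (-M) ^ (-(2 : ℝ) / 3) + r * x * p ∧
    0 < shat ∧
    sSup (Set.range fun a => Ψ shat a)
        = C * p ^ ((4 : ℝ) / 3) * (-M) ^ (-(2 : ℝ) / 3) + r * x * p ∧
    ∀ s : ℝ, 0 < s →
      Ψ s (-(μ - r) * x * p / (s * x ^ 2 * M)) = sSup (Set.range fun a => Ψ s a) := by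
  have hM' : 0 < -M := by linarith
  have hMne : M ≠ 0 := ne_of_lt hM
  have hμr' : μ - r ≠ 0 := sub_ne_zero.mpr hμr
  have hμr2 : 0 < (μ - r) ^ 2 := pow_two_pos_of_ne_zero hμr'
  have habs : 0 < |μ - r| := abs_pos.mpr hμr'
  set K : ℝ := (μ - r) ^ 2 * p ^ 2 / (2 * (-M)) with hK
  have hKpos : 0 < K := by positivity
  -- vertex value of the inner quadratic
  have hval : ∀ s : ℝ, 0 < s →
      Ψ s (-(μ - r) * x * p / (s * x ^ 2 * M)) = r * x * p + lam0 * s ^ 2 + K / s := by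
    intro s hs
    rw [hΨ, hK]
    have hs' : s ≠ 0 := ne_of_gt hs
    field_simp
    ring
  have hle : ∀ s : ℝ, 0 < s → ∀ a : ℝ,
      Ψ s a ≤ Ψ s (-(μ - r) * x * p / (s * x ^ 2 * M)) := by
    intro s hs a
    have hc : s * x ^ 2 * M < 0 :=
      mul_neg_of_pos_of_neg (by positivity) hM
    have hdiff : Ψ s (-(μ - r) * x * p / (s * x ^ 2 * M)) - Ψ s a
        = ((μ - r) * x * p + (s * x ^ 2 * M) * a) ^ 2 / (2 * (-(s * x ^ 2 * M))) := by
      rw [hΨ, hΨ]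
      have hcne : s * x ^ 2 * M ≠ 0 := ne_of_lt hc
      field_simp
      ring
    have h2 : 0 ≤ ((μ - r) * x * p + (s * x ^ 2 * M) * a) ^ 2 / (2 * (-(s * x ^ 2 * M))) :=
      div_nonneg (sq_nonneg _) (by linarith)
    linarith [hdiff ▸ h2]
  have hgreat : ∀ s : ℝ, 0 < s →
      IsGreatest (Set.range fun a => Ψ s a) (r * x * p + lam0 * s ^ 2 + K / s) := by
    intro s hs
    constructor
    · exact ⟨_, hval s hs⟩
    · rintro y ⟨a, rfl⟩
      calc Ψ s a ≤ Ψ s (-(μ - r) * x * p / (s * x ^ 2 * M)) := hle s hs a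
        _ = _ := hval s hs
  have hsup : ∀ s : ℝ, 0 < s →
      sSup (Set.range fun a => Ψ s a) = r * x * p + lam0 * s ^ 2 + K / s := by
    intro s hs
    exact (hgreat s hs).csSup_eq
  -- shat facts
  have hA : 0 < (μ - r) ^ 2 * p ^ 2 / (4 * lam0 * (-M)) := by positivity
  have hshatpos : 0 < shat := by
    rw [hshat]; exact Real.rpow_pos_of_pos hA _
  have hcube : shat ^ 3 = (μ - r) ^ 2 * p ^ 2 / (4 * lam0 * (-M)) := by
    rw [hshat, ← Real.rpow_natCast (_ ^ ((1:ℝ)/3)) 3, ← Real.rpow_mul hA.le]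
    norm_num
  have hK3 : K = 2 * lam0 * shat ^ 3 := by
    rw [hcube, hK]
    field_simp
    ring
  -- value at shat
  have hVshat : r * x * p + lam0 * shat ^ 2 + K / shat = r * x * p + 3 * lam0 * shat ^ 2 := by
    rw [hK3]
    field_simp
    ring
  -- lower bound (AM-GM)
  have hlb : ∀ s : ℝ, 0 < s →
      r * x * p + 3 * lam0 * shat ^ 2 ≤ r * x * p + lam0 * s ^ 2 + K / s := by
    intro s hs
    rw [hK3]
    have h1 : 3 * lam0 * shat ^ 2 - lam0 * s ^ 2 ≤ 2 * lam0 * shat ^ 3 / s := by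
      rw [le_div_iff₀ hs]
      nlinarith [mul_nonneg (mul_nonneg hlam0.le (sq_nonneg (s - shat)))
        (by linarith : (0:ℝ) ≤ s + 2 * shat)]
    linarith
  -- the closed form
  have cube_rpow : ∀ (y e : ℝ), 0 < y → (y ^ e) ^ 3 = y ^ (3 * e) := by
    intro y e hy
    rw [← Real.rpow_natCast (y ^ e) 3, ← Real.rpow_mul hy.le]
    norm_num [mul_comm]
  have hCpos : 0 < C := by rw [hC]; positivity
  have key : 3 * lam0 * shat ^ 2 = C * p ^ ((4:ℝ)/3) * (-M) ^ (-(2:ℝ)/3) := by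
    have hL : (0:ℝ) ≤ 3 * lam0 * shat ^ 2 := by positivity
    have hR : (0:ℝ) ≤ C * p ^ ((4:ℝ)/3) * (-M) ^ (-(2:ℝ)/3) := by
      have := Real.rpow_pos_of_pos hp ((4:ℝ)/3)
      have := Real.rpow_pos_of_pos hM' (-(2:ℝ)/3)
      positivity
    have hcubes : (3 * lam0 * shat ^ 2) ^ 3
        = (C * p ^ ((4:ℝ)/3) * (-M) ^ (-(2:ℝ)/3)) ^ 3 := by
      have hLc : (3 * lam0 * shat ^ 2) ^ 3 = 27 * lam0 ^ 3 * (shat ^ 3) ^ 2 := by ring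
      have e1 : ((2:ℝ) ^ (-(4:ℝ)/3)) ^ 3 = (2:ℝ) ^ (-(4:ℝ)) := by
        rw [cube_rpow _ _ (by norm_num)]; norm_num
      have e2 : (lam0 ^ ((1:ℝ)/3)) ^ 3 = lam0 := by
        rw [cube_rpow _ _ hlam0]; norm_num
      have e3 : (|μ - r| ^ ((4:ℝ)/3)) ^ 3 = (μ - r) ^ 4 := by
        rw [cube_rpow _ _ habs]
        norm_num
        rw [← abs_pow, abs_of_nonneg (by positivity : (0:ℝ) ≤ (μ - r) ^ 4)]
      have e4 : (p ^ ((4:ℝ)/3)) ^ 3 = p ^ 4 := by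
        rw [cube_rpow _ _ hp]
        rw [show (3:ℝ) * (4/3) = ((4:ℕ):ℝ) by norm_num, Real.rpow_natCast]
      have e5 : ((-M) ^ (-(2:ℝ)/3)) ^ 3 = ((-M) ^ 2)⁻¹ := by
        rw [cube_rpow _ _ hM']
        rw [show (3:ℝ) * (-2/3) = -((2:ℕ):ℝ) by norm_num, Real.rpow_neg hM'.le,
          Real.rpow_natCast]
      have e6 : (2:ℝ) ^ (-(4:ℝ)) = ((2:ℝ) ^ (4:ℕ))⁻¹ := by
        rw [show (-(4:ℝ)) = -((4:ℕ):ℝ) by norm_num, Real.rpow_neg (by norm_num),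
          Real.rpow_natCast]
      rw [hLc, hcube]
      rw [show (C * p ^ ((4:ℝ)/3) * (-M) ^ (-(2:ℝ)/3)) ^ 3
         = C ^ 3 * (p ^ ((4:ℝ)/3)) ^ 3 * ((-M) ^ (-(2:ℝ)/3)) ^ 3 by ring]
      rw [hC, show (3 * (2:ℝ) ^ (-(4:ℝ)/3) * lam0 ^ ((1:ℝ)/3) * |μ - r| ^ ((4:ℝ)/3)) ^ 3
         = 27 * ((2:ℝ) ^ (-(4:ℝ)/3)) ^ 3 * (lam0 ^ ((1:ℝ)/3)) ^ 3
            * (|μ - r| ^ ((4:ℝ)/3)) ^ 3 by ring]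
      rw [e1, e2, e3, e4, e5, e6]
      field_simp
      ring
    exact (pow_left_strictMonoOn₀ (by norm_num : (3:ℕ) ≠ 0)).injOn hL hR hcubes
  -- assemble
  have hleast : IsLeast ((fun s => sSup (Set.range fun a => Ψ s a)) '' {s : ℝ | 0 < s})
      (r * x * p + 3 * lam0 * shat ^ 2) := by
    constructor
    · exact ⟨shat, hshatpos, by beta_reduce; rw [hsup shat hshatpos, hVshat]⟩
    · rintro y ⟨s, hs, rfl⟩
      beta_reduce
      rw [hsup s hs]
      exact hlb s hs
  have hInf := hleast.csInf_eq
  refine ⟨?_, hshatpos, ?_, ?_⟩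
  · rw [hInf, key]; ring
  · rw [hsup shat hshatpos, hVshat, key]; ring
  · intro s hs
    rw [hsup s hs]
    exact hval s hs
end
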